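/- arXiv:1705.09249 — 2 statements merged into one kernel-verified Lean document; each statement's English description precedes it below -/
import Mathlib

section
/- Let X ∈ ℝ^{n×p} with rows x₁ᵀ,…,xₙᵀ, let β ∈ ℝ^p be fixed, and let W(β) ∈ ℝ^{n×n} be the diagonal matrix with i-th diagonal entry exp(xᵢᵀβ)/(1+exp(xᵢᵀβ))². Let D ∈ ℝ^{m×p} with ker(X) ∩ ker(D) = {0}, and for ν > 0 set A_W(ν) = (ν/n)·XᵀW(β)X + DᵀD (a symmetric positive definite matrix). Let S ⊆ {1,…,m} with s = |S| < m and D_{S^c} the submatrix of rows of D outside S. Define θ(ν) = arccos √( trace(D_{S^c} A_W(ν)⁻¹ D_{S^c}ᵀ) / (m−s) ). Then lim_{ν→+∞} θ(ν) = π/2 if and only if the column space of D_{S^c}ᵀ is contained in the column space of Xᵀ. -/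
/-!
Write `A(t) = t • M + B` with `M = XᵀWX / n` and `B = DᵀD`: both are positive semidefinite and
`ker M ⊓ ker B = ⊥`, so `A(t)` is positive definite for `t > 0`. The trace is the sum of
`q_t(d) = dᵀ A(t)⁻¹ d` over the rows `d` of `D_{Sᶜ}`, and `θ → π/2` exactly when it tends to `0`.
If `d = M y`, Cauchy–Schwarz for `M` gives `q_t(d) ≤ yᵀMy / t`. If `d ∉ range M = (ker M)ᗮ`,
choose `z ∈ ker M` with `d ⬝ᵥ z ≠ 0`; Cauchy–Schwarz for `A(t)` gives
`(d ⬝ᵥ z)² ≤ q_t(d) · zᵀBz`, so `q_t(d)` does not tend to `0`. Finally `range M = range Xᵀ`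
because the logistic weights are positive.
-/

open Matrix Real Filter Topology

theorem Filter.tendsto_div_const_nhds_zero_iff {α : Type*} {l : Filter α} {f : α → ℝ} {c : ℝ}
    (hc : c ≠ 0) : Tendsto (fun x => f x / c) l (𝓝 0) ↔ Tendsto f l (𝓝 0) := by
  simpa [div_eq_inv_mul] using tendsto_const_smul_iff₀ (f := f) (l := l) (a := 0) (inv_ne_zero hc)

theorem Filter.tendsto_fintype_sum_nhds_zero_iff {α ι : Type*} [Fintype ι] {l : Filter α}
    {f : ι → α → ℝ} (hf : ∀ i, ∀ᶠ x in l, 0 ≤ f i x) :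
    Tendsto (fun x => ∑ i, f i x) l (𝓝 0) ↔ ∀ i, Tendsto (f i) l (𝓝 0) := by
  refine ⟨fun h i => ?_, fun h => by simpa using tendsto_finsetSum Finset.univ fun i _ => h i⟩
  refine tendsto_of_tendsto_of_tendsto_of_le_of_le' tendsto_const_nhds h (hf i) ?_
  filter_upwards [eventually_all.mpr hf] with x hx
  exact Finset.single_le_sum (fun j _ => hx j) (Finset.mem_univ i)

theorem Real.tendsto_arccos_sqrt_nhds_pi_div_two_iff {α : Type*} {l : Filter α} {f : α → ℝ}
    (hf : ∀ᶠ x in l, 0 ≤ f x) :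
    Tendsto (fun x => arccos √(f x)) l (𝓝 (π / 2)) ↔ Tendsto f l (𝓝 0) := by
  refine ⟨fun h => ?_, fun h => by
    simpa [Function.comp_def] using (continuous_arccos.tendsto 0).comp (by simpa using h.sqrt)⟩
  have hcos : Tendsto (fun x => cos (arccos √(f x))) l (𝓝 0) := by
    simpa [Function.comp_def] using (continuous_cos.tendsto _).comp h
  have hsqrt : Tendsto (fun x => √(f x)) l (𝓝 0) := by
    refine hcos.congr' ?_
    filter_upwards [h.eventually (lt_mem_nhds pi_div_two_pos)] with x hx
    exact cos_arccos (by linarith [sqrt_nonneg (f x)]) (arccos_pos.mp hx).le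
  refine (by simpa using hsqrt.mul hsqrt : Tendsto (fun x => √(f x) * √(f x)) l (𝓝 0)).congr' ?_
  filter_upwards [hf] with x hx
  exact mul_self_sqrt hx

namespace Matrix

variable {ι κ : Type*} [Fintype ι]

theorem trace_mul_mul_transpose {α : Type*} [CommSemiring α] [Fintype κ] (N : Matrix κ ι α)
    (G : Matrix ι ι α) : (N * G * Nᵀ).trace = ∑ i, N i ⬝ᵥ (G *ᵥ N i) := by
  simp only [trace, diag, mul_apply, transpose_apply, dotProduct, mulVec, Finset.sum_mul,
    Finset.mul_sum]
  exact Finset.sum_congr rfl fun i _ => Finset.sum_comm.trans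
    (Finset.sum_congr rfl fun j _ => Finset.sum_congr rfl fun k _ => by ring)

theorem IsHermitian.dotProduct_mulVec_comm {M : Matrix ι ι ℝ} (hM : M.IsHermitian)
    (x y : ι → ℝ) : x ⬝ᵥ (M *ᵥ y) = y ⬝ᵥ (M *ᵥ x) := by
  rw [dotProduct_mulVec, ← mulVec_transpose, ← conjTranspose_eq_transpose_of_trivial, hM.eq,
    dotProduct_comm]

theorem IsHermitian.exists_mulVec_eq_zero_dotProduct_ne_zero [DecidableEq ι] {M : Matrix ι ι ℝ}
    (hM : M.IsHermitian) {d : ι → ℝ} (hd : d ∉ LinearMap.range M.mulVecLin) :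
    ∃ z, M *ᵥ z = 0 ∧ d ⬝ᵥ z ≠ 0 := by
  by_contra! h
  apply hd
  have hd_mem : WithLp.toLp 2 d ∈ (LinearMap.range M.toEuclideanLin)ᗮᗮ := by
    rw [(isSymmetric_toEuclideanLin_iff.mpr hM).orthogonal_range, Submodule.mem_orthogonal]
    intro z hz
    have := h z.ofLp (by simpa using congrArg WithLp.ofLp hz)
    simpa [EuclideanSpace.inner_eq_star_dotProduct, dotProduct_comm] using this
  rw [Submodule.orthogonal_orthogonal] at hd_mem
  obtain ⟨y, hy⟩ := hd_mem
  exact ⟨y.ofLp, by simpa using congrArg WithLp.ofLp hy⟩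

theorem PosSemidef.dotProduct_mulVec_sq_le {M : Matrix ι ι ℝ} (hM : M.PosSemidef)
    (x y : ι → ℝ) : (x ⬝ᵥ (M *ᵥ y)) ^ 2 ≤ (x ⬝ᵥ (M *ᵥ x)) * (y ⬝ᵥ (M *ᵥ y)) := by
  classical
  have hsymm : M.toBilin'.IsSymm := isSymm_toBilin'_iff_isSymm.mpr hM.isHermitian
  simpa only [toBilin'_apply'] using M.toBilin'.apply_sq_le_of_symm
    (fun v => by simpa [toBilin'_apply'] using hM.dotProduct_mulVec_nonneg v)
    (LinearMap.BilinForm.isSymm_iff.mp hsymm) x y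

theorem PosDef.dotProduct_sq_le_inv_mul [DecidableEq ι] {A : Matrix ι ι ℝ} (hA : A.PosDef)
    (d z : ι → ℝ) : (d ⬝ᵥ z) ^ 2 ≤ (d ⬝ᵥ (A⁻¹ *ᵥ d)) * (z ⬝ᵥ (A *ᵥ z)) := by
  set w := A⁻¹ *ᵥ d
  have hw : A *ᵥ w = d := by
    rw [mulVec_mulVec, mul_nonsing_inv _ ((isUnit_iff_isUnit_det A).mp hA.isUnit), one_mulVec]
  have h := hA.posSemidef.dotProduct_mulVec_sq_le w z
  rwa [hA.isHermitian.dotProduct_mulVec_comm w z, hw, dotProduct_comm z, dotProduct_comm w] at h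

variable {M B : Matrix ι ι ℝ}

theorem PosSemidef.posDef_smul_add (hM : M.PosSemidef) (hB : B.PosSemidef)
    (hker : LinearMap.ker M.mulVecLin ⊓ LinearMap.ker B.mulVecLin = ⊥) {t : ℝ} (ht : 0 < t) :
    (t • M + B).PosDef := by
  refine .of_dotProduct_mulVec_pos ((hM.smul ht.le).add hB).isHermitian fun x hx => ?_
  have hMx := hM.dotProduct_mulVec_nonneg x
  have hBx := hB.dotProduct_mulVec_nonneg x
  rw [add_mulVec, smul_mulVec, dotProduct_add, dotProduct_smul, smul_eq_mul]
  by_contra! hle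
  have hMx0 : M *ᵥ x = 0 := (hM.dotProduct_mulVec_zero_iff x).mp (by nlinarith)
  have hBx0 : B *ᵥ x = 0 := (hB.dotProduct_mulVec_zero_iff x).mp (by nlinarith)
  have hx_mem : x ∈ LinearMap.ker M.mulVecLin ⊓ LinearMap.ker B.mulVecLin := ⟨hMx0, hBx0⟩
  rw [hker] at hx_mem
  exact hx hx_mem

section Inverse

variable [DecidableEq ι]

theorem dotProduct_inv_smul_add_mulVec_le (hM : M.PosSemidef) (hB : B.PosSemidef) {t : ℝ}
    (ht : 0 < t) (hA : (t • M + B).PosDef) (y : ι → ℝ) :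
    (M *ᵥ y) ⬝ᵥ ((t • M + B)⁻¹ *ᵥ (M *ᵥ y)) ≤ (y ⬝ᵥ (M *ᵥ y)) / t := by
  set w := (t • M + B)⁻¹ *ᵥ (M *ᵥ y)
  have hw : (t • M + B) *ᵥ w = M *ᵥ y := by
    rw [mulVec_mulVec, mul_nonsing_inv _ ((isUnit_iff_isUnit_det _).mp hA.isUnit), one_mulVec]
  have hq_nonneg : 0 ≤ (M *ᵥ y) ⬝ᵥ w := by
    simpa only [star_trivial] using hA.inv.posSemidef.dotProduct_mulVec_nonneg (M *ᵥ y)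
  have hq_M : (M *ᵥ y) ⬝ᵥ w = y ⬝ᵥ (M *ᵥ w) := by
    rw [dotProduct_comm, hM.isHermitian.dotProduct_mulVec_comm]
  have hq_A : t * (w ⬝ᵥ (M *ᵥ w)) + w ⬝ᵥ (B *ᵥ w) = (M *ᵥ y) ⬝ᵥ w := by
    rw [dotProduct_comm (M *ᵥ y), ← hw, add_mulVec, smul_mulVec, dotProduct_add, dotProduct_smul,
      smul_eq_mul]
  have hBw := hB.dotProduct_mulVec_nonneg w
  have hMy := hM.dotProduct_mulVec_nonneg y
  have hcs := hM.dotProduct_mulVec_sq_le y w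
  simp only [star_trivial] at hBw hMy
  rw [← hq_M] at hcs
  have hsq : t * ((M *ᵥ y) ⬝ᵥ w) ^ 2 ≤ (y ⬝ᵥ (M *ᵥ y)) * ((M *ᵥ y) ⬝ᵥ w) := by
    nlinarith [mul_le_mul_of_nonneg_left hcs ht.le, mul_nonneg hMy hBw]
  rw [le_div_iff₀ ht]
  rcases hq_nonneg.eq_or_lt with hq | hq
  · rwa [← hq, zero_mul]
  · nlinarith

theorem tendsto_dotProduct_inv_smul_add_mulVec_iff (hM : M.PosSemidef) (hB : B.PosSemidef)
    (hker : LinearMap.ker M.mulVecLin ⊓ LinearMap.ker B.mulVecLin = ⊥) (d : ι → ℝ) :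
    Tendsto (fun t : ℝ => d ⬝ᵥ ((t • M + B)⁻¹ *ᵥ d)) atTop (𝓝 0) ↔
      d ∈ LinearMap.range M.mulVecLin := by
  have hA : ∀ᶠ t : ℝ in atTop, (t • M + B).PosDef :=
    (eventually_gt_atTop 0).mono fun t ht => hM.posDef_smul_add hB hker ht
  constructor
  · intro hlim
    by_contra hd
    obtain ⟨z, hz, hdz⟩ := hM.isHermitian.exists_mulVec_eq_zero_dotProduct_ne_zero hd
    have hbound : ∀ᶠ t : ℝ in atTop,
        (d ⬝ᵥ z) ^ 2 ≤ (d ⬝ᵥ ((t • M + B)⁻¹ *ᵥ d)) * (z ⬝ᵥ (B *ᵥ z)) :=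
      hA.mono fun t ht => by
        simpa [add_mulVec, smul_mulVec, hz] using ht.dotProduct_sq_le_inv_mul d z
    have hle : (d ⬝ᵥ z) ^ 2 ≤ 0 :=
      ge_of_tendsto (by simpa using hlim.mul_const (z ⬝ᵥ (B *ᵥ z))) hbound
    exact hdz (pow_eq_zero_iff two_ne_zero |>.mp (le_antisymm hle (sq_nonneg _)))
  · rintro ⟨y, rfl⟩
    refine tendsto_of_tendsto_of_tendsto_of_le_of_le' tendsto_const_nhds
      ((tendsto_const_nhds (x := y ⬝ᵥ (M *ᵥ y))).div_atTop tendsto_id) ?_ ?_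
    · exact hA.mono fun t ht => by
        simpa using ht.inv.posSemidef.dotProduct_mulVec_nonneg (M *ᵥ y)
    · exact (eventually_gt_atTop 0).mono fun t ht =>
        dotProduct_inv_smul_add_mulVec_le hM hB ht (hM.posDef_smul_add hB hker ht) y

theorem tendsto_trace_mul_inv_smul_add_mul_transpose_iff [Fintype κ] (hM : M.PosSemidef)
    (hB : B.PosSemidef) (hker : LinearMap.ker M.mulVecLin ⊓ LinearMap.ker B.mulVecLin = ⊥)
    (N : Matrix κ ι ℝ) :
    Tendsto (fun t : ℝ => (N * (t • M + B)⁻¹ * Nᵀ).trace) atTop (𝓝 0) ↔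
      LinearMap.range Nᵀ.mulVecLin ≤ LinearMap.range M.mulVecLin := by
  have hnonneg : ∀ i, ∀ᶠ t : ℝ in atTop, 0 ≤ N i ⬝ᵥ ((t • M + B)⁻¹ *ᵥ N i) := fun i =>
    (eventually_ge_atTop 0).mono fun t ht => by
      simpa using ((hM.smul ht).add hB).inv.dotProduct_mulVec_nonneg (N i)
  simp_rw [trace_mul_mul_transpose, tendsto_fintype_sum_nhds_zero_iff hnonneg,
    tendsto_dotProduct_inv_smul_add_mulVec_iff hM hB hker, range_mulVecLin, Submodule.span_le,
    Set.range_subset_iff]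
  rfl

end Inverse

section Gram

variable [Fintype κ] {W : Matrix κ κ ℝ}

theorem PosDef.ker_mulVecLin_transpose_mul_mul_same (hW : W.PosDef) (X : Matrix κ ι ℝ) :
    LinearMap.ker (Xᵀ * W * X).mulVecLin = LinearMap.ker X.mulVecLin := by
  ext z
  simp only [LinearMap.mem_ker, mulVecLin_apply, ← mulVec_mulVec]
  refine ⟨fun h => ?_, fun h => by rw [h, mulVec_zero, mulVec_zero]⟩
  by_contra hXz
  have hpos := hW.dotProduct_mulVec_pos hXz
  have hform : (X *ᵥ z) ⬝ᵥ (W *ᵥ (X *ᵥ z)) = z ⬝ᵥ (Xᵀ *ᵥ (W *ᵥ (X *ᵥ z))) := by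
    rw [dotProduct_mulVec z, vecMul_transpose]
  rw [star_trivial, hform, h, dotProduct_zero] at hpos
  exact hpos.false

theorem PosDef.range_mulVecLin_transpose_mul_mul_same (hW : W.PosDef) (X : Matrix κ ι ℝ) :
    LinearMap.range (Xᵀ * W * X).mulVecLin = LinearMap.range Xᵀ.mulVecLin := by
  refine Submodule.eq_of_le_of_finrank_eq ?_ ?_
  · rw [Matrix.mul_assoc, mulVecLin_mul]
    exact LinearMap.range_comp_le_range _ _
  · have h1 := LinearMap.finrank_range_add_finrank_ker (Xᵀ * W * X).mulVecLin
    have h2 := LinearMap.finrank_range_add_finrank_ker X.mulVecLin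
    have h3 : Xᵀ.rank = X.rank := rank_transpose X
    rw [hW.ker_mulVecLin_transpose_mul_mul_same] at h1
    unfold rank at h3
    omega

end Gram

end Matrix

theorem gsplit_lbi_angle_limit_iff_logit_general {n p m : ℕ}
    (X : Matrix (Fin n) (Fin p) ℝ) (β : Fin p → ℝ)
    (W : Matrix (Fin n) (Fin n) ℝ)
    (hW : W = Matrix.diagonal (fun i =>
      Real.exp (X.mulVec β i) / (1 + Real.exp (X.mulVec β i)) ^ 2))
    (D : Matrix (Fin m) (Fin p) ℝ)
    (hker : LinearMap.ker X.mulVecLin ⊓ LinearMap.ker D.mulVecLin = ⊥)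
    (S : Finset (Fin m)) (hS : S.card < m)
    (A : ℝ → Matrix (Fin p) (Fin p) ℝ)
    (hA : ∀ ν : ℝ, A ν = (ν / n) • (Xᵀ * W * X) + Dᵀ * D)
    (Dsc : Matrix {i : Fin m // i ∉ S} (Fin p) ℝ)
    (θ : ℝ → ℝ)
    (hθ : ∀ ν : ℝ, θ ν = Real.arccos (Real.sqrt
      ((Dsc * (A ν)⁻¹ * Dscᵀ).trace / ((m : ℝ) - S.card)))) :
    Tendsto θ atTop (nhds (Real.pi / 2)) ↔
      LinearMap.range (Dscᵀ).mulVecLin ≤ LinearMap.range (Xᵀ).mulVecLin := by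
  obtain ⟨w, hw, rfl⟩ : ∃ w : Fin n → ℝ, (∀ i, 0 < w i) ∧ W = diagonal w :=
    ⟨_, fun i => by positivity, hW⟩
  -- Absorbing `1 / n` into the weights also covers `n = 0`, where `ν / n = 0`.
  have hWn : (diagonal fun i => w i / n).PosDef :=
    posDef_diagonal_iff.mpr fun i => div_pos (hw i) (Nat.cast_pos.mpr i.pos)
  set M := Xᵀ * diagonal (fun i => w i / n) * X with hM_def
  have hAM : A = fun ν => ν • M + Dᵀ * D := funext fun ν => by
    rw [hA, hM_def, show (fun i => w i / n) = (n : ℝ)⁻¹ • w by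
        simp only [div_eq_inv_mul]; rfl,
      diagonal_smul, Matrix.mul_smul, Matrix.smul_mul, smul_smul, div_eq_mul_inv]
  have hM : M.PosSemidef := by simpa using hWn.posSemidef.conjTranspose_mul_mul_same X
  have hB : (Dᵀ * D).PosSemidef := by simpa using posSemidef_conjTranspose_mul_self D
  have hkerMB : LinearMap.ker M.mulVecLin ⊓ LinearMap.ker (Dᵀ * D).mulVecLin = ⊥ := by
    rwa [hWn.ker_mulVecLin_transpose_mul_mul_same, ker_mulVecLin_transpose_mul_self]
  have hcard : (0 : ℝ) < m - S.card := sub_pos.mpr (by exact_mod_cast hS)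
  have hnonneg : ∀ᶠ ν : ℝ in atTop, 0 ≤ (Dsc * (A ν)⁻¹ * Dscᵀ).trace / (m - S.card) :=
    (eventually_ge_atTop 0).mono fun ν hν => div_nonneg (by
      simpa [hAM] using (((hM.smul hν).add hB).inv.mul_mul_conjTranspose_same Dsc).trace_nonneg)
      hcard.le
  rw [show θ = _ from funext hθ, tendsto_arccos_sqrt_nhds_pi_div_two_iff hnonneg,
    tendsto_div_const_nhds_zero_iff hcard.ne', hAM,
    tendsto_trace_mul_inv_smul_add_mul_transpose_iff hM hB hkerMB,
    hWn.range_mulVecLin_transpose_mul_mul_same]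

/-- **Theorem 1 (logit model) of GSplit LBI.**
With `W(β)` the diagonal matrix of logistic weights `exp(xᵢᵀβ)/(1+exp(xᵢᵀβ))²` and
`A_W(ν) = (ν/n)·XᵀW(β)X + DᵀD`, the angle
`θ(ν) = arccos √(trace(D_{Sᶜ} A_W(ν)⁻¹ D_{Sᶜ}ᵀ)/(m−s))` tends to `π/2` as `ν → ∞`
iff `Im(D_{Sᶜ}ᵀ) ⊆ Im(Xᵀ)`. -/
theorem gsplit_lbi_angle_limit_iff_logit {n p m : ℕ}
    (X : Matrix (Fin n) (Fin p) ℝ) (β : Fin p → ℝ)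
    (W : Matrix (Fin n) (Fin n) ℝ)
    (hW : W = Matrix.diagonal (fun i =>
      Real.exp (X.mulVec β i) / (1 + Real.exp (X.mulVec β i)) ^ 2))
    (D : Matrix (Fin m) (Fin p) ℝ)
    (hker : LinearMap.ker X.mulVecLin ⊓ LinearMap.ker D.mulVecLin = ⊥)
    (S : Finset (Fin m)) (hS : S.card < m)
    (A : ℝ → Matrix (Fin p) (Fin p) ℝ)
    (hA : ∀ ν : ℝ, A ν = (ν / n) • (Xᵀ * W * X) + Dᵀ * D)
    (Dsc : Matrix {i : Fin m // i ∉ S} (Fin p) ℝ)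
    (hDsc : Dsc = D.submatrix (fun i : {i : Fin m // i ∉ S} => (i : Fin m)) id)
    (θ : ℝ → ℝ)
    (hθ : ∀ ν : ℝ, θ ν = Real.arccos (Real.sqrt
      ((Dsc * (A ν)⁻¹ * Dscᵀ).trace / ((m : ℝ) - S.card)))) :
    Tendsto θ atTop (nhds (Real.pi / 2)) ↔
      LinearMap.range (Dscᵀ).mulVecLin ≤ LinearMap.range (Xᵀ).mulVecLin :=
  gsplit_lbi_angle_limit_iff_logit_general X β W hW D hker S hS A hA Dsc θ hθ
end

section
/- Let X ∈ ℝ^{n×p} and D ∈ ℝ^{m×p} be real matrices with ker(X) ∩ ker(D) = {0}, and for ν > 0 set A(ν) = (ν/n)·XᵀX + DᵀD. If d = Xᵀg for some g ∈ ℝⁿ, then for every ν > 0, dᵀ A(ν)⁻¹ d ≤ n·‖g‖² / ν. -/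
/-!
With `u = A⁻¹ d` one has `dᵀ A⁻¹ d = uᵀ A u ≥ (ν / n) ‖X u‖²`, while `dᵀ u = gᵀ X u ≤ ‖g‖ ‖X u‖`
by Cauchy–Schwarz; eliminating `‖X u‖` gives `dᵀ A⁻¹ d ≤ n ‖g‖² / ν`.
-/

open Matrix

namespace Matrix

variable {ι κ 𝕜 : Type*} [Fintype ι] [Fintype κ]

theorem dotProduct_sq_le_dotProduct_self_mul_dotProduct_self [CommRing 𝕜] [LinearOrder 𝕜]
    [IsStrictOrderedRing 𝕜] (v w : ι → 𝕜) : (v ⬝ᵥ w) ^ 2 ≤ (v ⬝ᵥ v) * (w ⬝ᵥ w) := by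
  simpa only [dotProduct, sq] using Finset.sum_mul_sq_le_sq_mul_sq Finset.univ v w

theorem dotProduct_self_nonneg [CommRing 𝕜] [LinearOrder 𝕜] [IsStrictOrderedRing 𝕜]
    (v : ι → 𝕜) : 0 ≤ v ⬝ᵥ v :=
  Finset.sum_nonneg fun i _ => mul_self_nonneg (v i)

theorem dotProduct_transpose_mul_self_mulVec [CommSemiring 𝕜] (X : Matrix κ ι 𝕜) (x : ι → 𝕜) :
    x ⬝ᵥ ((Xᵀ * X) *ᵥ x) = (X *ᵥ x) ⬝ᵥ (X *ᵥ x) := by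
  rw [← mulVec_mulVec, dotProduct_mulVec, vecMul_transpose]

theorem nonsing_inv_mul_mul_nonsing_inv [DecidableEq ι] [CommRing 𝕜] (A : Matrix ι ι 𝕜) :
    A⁻¹ * A * A⁻¹ = A⁻¹ := by
  rcases A.nonsing_inv_cancel_or_zero with ⟨h, -⟩ | h
  · rw [h, one_mul]
  · rw [h, mul_zero]

/-- This also holds for singular `A`, where `A⁻¹ = 0` by convention. -/
theorem dotProduct_nonsing_inv_mulVec_eq [DecidableEq ι] [CommRing 𝕜] {A : Matrix ι ι 𝕜}
    (hA : Aᵀ = A) (d : ι → 𝕜) :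
    d ⬝ᵥ (A⁻¹ *ᵥ d) = (A⁻¹ *ᵥ d) ⬝ᵥ (A *ᵥ (A⁻¹ *ᵥ d)) := by
  conv_lhs => rw [← nonsing_inv_mul_mul_nonsing_inv A, ← mulVec_mulVec, ← mulVec_mulVec]
  rw [dotProduct_mulVec, ← mulVec_transpose, transpose_nonsing_inv, hA]

theorem mul_dotProduct_nonsing_inv_mulVec_le [DecidableEq ι] [Field 𝕜] [LinearOrder 𝕜]
    [IsStrictOrderedRing 𝕜] {A : Matrix ι ι 𝕜} (hA : Aᵀ = A) (X : Matrix κ ι 𝕜) {c : 𝕜}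
    (hc : 0 ≤ c) (hAX : ∀ x, c * ((X *ᵥ x) ⬝ᵥ (X *ᵥ x)) ≤ x ⬝ᵥ (A *ᵥ x)) (g : κ → 𝕜) :
    c * ((Xᵀ *ᵥ g) ⬝ᵥ (A⁻¹ *ᵥ (Xᵀ *ᵥ g))) ≤ g ⬝ᵥ g := by
  set u := A⁻¹ *ᵥ (Xᵀ *ᵥ g)
  set t := (Xᵀ *ᵥ g) ⬝ᵥ u
  have hlower : c * ((X *ᵥ u) ⬝ᵥ (X *ᵥ u)) ≤ t :=
    (hAX u).trans_eq (dotProduct_nonsing_inv_mulVec_eq hA _).symm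
  have hupper : t ^ 2 ≤ (g ⬝ᵥ g) * ((X *ᵥ u) ⬝ᵥ (X *ᵥ u)) := by
    have ht : t = g ⬝ᵥ (X *ᵥ u) := by rw [dotProduct_mulVec, ← mulVec_transpose]
    exact ht ▸ dotProduct_sq_le_dotProduct_self_mul_dotProduct_self g (X *ᵥ u)
  have hquad : c * t * t ≤ (g ⬝ᵥ g) * t :=
    calc c * t * t = c * t ^ 2 := by ring
      _ ≤ c * ((g ⬝ᵥ g) * ((X *ᵥ u) ⬝ᵥ (X *ᵥ u))) := mul_le_mul_of_nonneg_left hupper hc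
      _ = (g ⬝ᵥ g) * (c * ((X *ᵥ u) ⬝ᵥ (X *ᵥ u))) := by ring
      _ ≤ (g ⬝ᵥ g) * t := mul_le_mul_of_nonneg_left hlower (dotProduct_self_nonneg g)
  rcases le_or_gt t 0 with ht | ht
  · exact (mul_nonpos_of_nonneg_of_nonpos hc ht).trans (dotProduct_self_nonneg g)
  · exact le_of_mul_le_mul_right hquad ht

end Matrix

theorem quadform_decay_of_rowspace_general {n p m : ℕ}
    (X : Matrix (Fin n) (Fin p) ℝ) (D : Matrix (Fin m) (Fin p) ℝ)
    (A : ℝ → Matrix (Fin p) (Fin p) ℝ)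
    (hA : ∀ ν : ℝ, A ν = (ν / n) • (Xᵀ * X) + Dᵀ * D)
    (g : EuclideanSpace ℝ (Fin n)) (d : Fin p → ℝ) (hd : d = Xᵀ *ᵥ g) :
    ∀ ν : ℝ, 0 < ν → d ⬝ᵥ ((A ν)⁻¹ *ᵥ d) ≤ n * ‖g‖ ^ 2 / ν := by
  intro ν hν
  obtain rfl | hn := Nat.eq_zero_or_pos n
  · simp [hd, Subsingleton.elim g 0]
  have hsymm : (A ν)ᵀ = A ν := by
    simp [hA, transpose_add, transpose_smul, transpose_mul]
  have hform (x : Fin p → ℝ) : ν / n * ((X *ᵥ x) ⬝ᵥ (X *ᵥ x)) ≤ x ⬝ᵥ (A ν *ᵥ x) := by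
    rw [hA, add_mulVec, dotProduct_add, smul_mulVec, dotProduct_smul, smul_eq_mul,
      dotProduct_transpose_mul_self_mulVec, dotProduct_transpose_mul_self_mulVec]
    exact le_add_of_nonneg_right (dotProduct_self_nonneg _)
  have hbound := mul_dotProduct_nonsing_inv_mulVec_le hsymm X (by positivity) hform g
  have hnorm : g.ofLp ⬝ᵥ g.ofLp = ‖g‖ ^ 2 := by
    rw [← real_inner_self_eq_norm_sq, EuclideanSpace.inner_eq_star_dotProduct, star_trivial]
  rw [← hd, hnorm, div_mul_eq_mul_div, div_le_iff₀ (by positivity)] at hbound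
  rw [le_div_iff₀ hν]
  linarith

/-- **Quantitative forward direction of Theorem 1.** If `d = Xᵀg`, then for every
`ν > 0` one has `dᵀ A(ν)⁻¹ d ≤ n·‖g‖²/ν`, where `A(ν) = (ν/n)·XᵀX + DᵀD` and
`‖g‖` is the Euclidean norm of `g`. -/
theorem quadform_decay_of_rowspace {n p m : ℕ}
    (X : Matrix (Fin n) (Fin p) ℝ) (D : Matrix (Fin m) (Fin p) ℝ)
    (hker : LinearMap.ker X.mulVecLin ⊓ LinearMap.ker D.mulVecLin = ⊥)
    (A : ℝ → Matrix (Fin p) (Fin p) ℝ)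
    (hA : ∀ ν : ℝ, A ν = (ν / n) • (Xᵀ * X) + Dᵀ * D)
    (g : EuclideanSpace ℝ (Fin n)) (d : Fin p → ℝ) (hd : d = Xᵀ *ᵥ g) :
    ∀ ν : ℝ, 0 < ν → d ⬝ᵥ ((A ν)⁻¹ *ᵥ d) ≤ n * ‖g‖ ^ 2 / ν :=
  quadform_decay_of_rowspace_general X D A hA g d hd
end
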